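/- For the cost c(x,y) = -(x₁cos(y₁) + x₂sin(y₁))e^{y₂} + e^{2y₂}/2 + (x₁²+x₂²)/2 on ℝ² × ℝ², det D²ₓᵧc(x,y) = -e^{2y₂} < 0 for all (x,y); the map x ↦ D_yc(x,y) is injective for each fixed y, while y ↦ Dₓc(x,y) is not injective for any fixed x. -/

import Mathlib

/-- The cost `c(x,y) = -(x₁ cos y₁ + x₂ sin y₁) e^{y₂} + e^{2y₂}/2 + (x₁²+x₂²)/2`. -/
noncomputable def polarCost (x y : ℝ × ℝ) : ℝ :=
  -(x.1 * Real.cos y.1 + x.2 * Real.sin y.1) * Real.exp y.2 +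
    Real.exp (2 * y.2) / 2 + (x.1 ^ 2 + x.2 ^ 2) / 2

/-- Standard basis of `ℝ × ℝ`. -/
def stdBasis2 : Fin 2 → ℝ × ℝ := ![(1, 0), (0, 1)]

/-- The 2×2 matrix of mixed second partials `∂²c/∂xⁱ∂yʲ`. -/
noncomputable def mixedSecond2 (c : ℝ × ℝ → ℝ × ℝ → ℝ) (x y : ℝ × ℝ) :
    Matrix (Fin 2) (Fin 2) ℝ :=
  fun i j => fderiv ℝ (fun x' => fderiv ℝ (fun y' => c x' y') y (stdBasis2 j)) x (stdBasis2 i)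

/-- The derivative of `polarCost` in the `y` variable. -/
noncomputable def DyC (x y : ℝ × ℝ) : (ℝ × ℝ) →L[ℝ] ℝ :=
  ((x.1 * Real.sin y.1 - x.2 * Real.cos y.1) * Real.exp y.2) • ContinuousLinearMap.fst ℝ ℝ ℝ +
  (-(x.1 * Real.cos y.1 + x.2 * Real.sin y.1) * Real.exp y.2 + Real.exp (2 * y.2)) •
    ContinuousLinearMap.snd ℝ ℝ ℝ

lemma hasFDerivAt_polarCost_y (x y : ℝ × ℝ) :
    HasFDerivAt (fun y' => polarCost x y') (DyC x y) y := by
  have hcos : HasFDerivAt (fun y' : ℝ × ℝ => Real.cos y'.1)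
      ((-Real.sin y.1) • ContinuousLinearMap.fst ℝ ℝ ℝ) y :=
    (Real.hasDerivAt_cos y.1).comp_hasFDerivAt y (hasFDerivAt_fst)
  have hsin : HasFDerivAt (fun y' : ℝ × ℝ => Real.sin y'.1)
      ((Real.cos y.1) • ContinuousLinearMap.fst ℝ ℝ ℝ) y :=
    (Real.hasDerivAt_sin y.1).comp_hasFDerivAt y (hasFDerivAt_fst)
  have hexp : HasFDerivAt (fun y' : ℝ × ℝ => Real.exp y'.2)
      ((Real.exp y.2) • ContinuousLinearMap.snd ℝ ℝ ℝ) y :=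
    (Real.hasDerivAt_exp y.2).comp_hasFDerivAt y (hasFDerivAt_snd)
  have hexp2 : HasFDerivAt (fun y' : ℝ × ℝ => Real.exp (2 * y'.2))
      ((2 * Real.exp (2 * y.2)) • ContinuousLinearMap.snd ℝ ℝ ℝ) y := by
    have h0 : HasDerivAt (fun t : ℝ => 2 * t) 2 y.2 := by
      simpa using (hasDerivAt_id y.2).const_mul 2
    have h1 : HasDerivAt (fun t : ℝ => Real.exp (2 * t)) (2 * Real.exp (2 * y.2)) y.2 := by
      have := (Real.hasDerivAt_exp (2 * y.2)).comp y.2 h0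
      refine this.congr_deriv ?_
      ring
    exact h1.comp_hasFDerivAt y hasFDerivAt_snd
  have h := ((((hcos.const_mul x.1).add (hsin.const_mul x.2)).neg.mul hexp).add
      ((hexp2.const_mul (1/2 : ℝ)))).add_const ((x.1 ^ 2 + x.2 ^ 2) / 2)
  refine (h.congr_of_eventuallyEq (Filter.EventuallyEq.of_eq ?_)).congr_fderiv ?_
  · funext y'; simp [polarCost]; ring
  · ext <;> simp [DyC] <;> ring

/-- The derivative of `polarCost` in the `x` variable. -/
noncomputable def DxC (x y : ℝ × ℝ) : (ℝ × ℝ) →L[ℝ] ℝ :=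
  (x.1 - Real.cos y.1 * Real.exp y.2) • ContinuousLinearMap.fst ℝ ℝ ℝ +
  (x.2 - Real.sin y.1 * Real.exp y.2) • ContinuousLinearMap.snd ℝ ℝ ℝ

lemma hasFDerivAt_polarCost_x (x y : ℝ × ℝ) :
    HasFDerivAt (fun x' => polarCost x' y) (DxC x y) x := by
  have hf : HasFDerivAt (fun x' : ℝ × ℝ => x'.1) (ContinuousLinearMap.fst ℝ ℝ ℝ) x :=
    hasFDerivAt_fst
  have hs : HasFDerivAt (fun x' : ℝ × ℝ => x'.2) (ContinuousLinearMap.snd ℝ ℝ ℝ) x :=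
    hasFDerivAt_snd
  have h := ((((hf.const_mul (Real.cos y.1)).add (hs.const_mul (Real.sin y.1))).neg.mul_const
      (Real.exp y.2)).add_const (Real.exp (2 * y.2) / 2)).add
      (((hf.mul hf).add (hs.mul hs)).const_mul (1/2 : ℝ))
  refine (h.congr_of_eventuallyEq (Filter.EventuallyEq.of_eq ?_)).congr_fderiv ?_
  · funext x'; simp [polarCost]; ring
  · ext <;> simp [DxC] <;> ring

lemma hasFDerivAt_affine (a b c : ℝ) (x : ℝ × ℝ) :
    HasFDerivAt (fun x' : ℝ × ℝ => a * x'.1 + b * x'.2 + c)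
      (a • ContinuousLinearMap.fst ℝ ℝ ℝ + b • ContinuousLinearMap.snd ℝ ℝ ℝ) x :=
  ((hasFDerivAt_fst.const_mul a).add (hasFDerivAt_snd.const_mul b)).add_const c

lemma fderiv_affine (a b c : ℝ) (x v : ℝ × ℝ) :
    fderiv ℝ (fun x' : ℝ × ℝ => a * x'.1 + b * x'.2 + c) x v = a * v.1 + b * v.2 := by
  rw [(hasFDerivAt_affine a b c x).fderiv]
  simp

lemma key (y v x u : ℝ × ℝ) :
    fderiv ℝ (fun x' => fderiv ℝ (fun y' => polarCost x' y') y v) x u =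
      (Real.sin y.1 * Real.exp y.2 * v.1 - Real.cos y.1 * Real.exp y.2 * v.2) * u.1 +
      (-(Real.cos y.1) * Real.exp y.2 * v.1 - Real.sin y.1 * Real.exp y.2 * v.2) * u.2 := by
  have h : (fun x' : ℝ × ℝ => fderiv ℝ (fun y' => polarCost x' y') y v) =
      fun x' : ℝ × ℝ =>
        (Real.sin y.1 * Real.exp y.2 * v.1 - Real.cos y.1 * Real.exp y.2 * v.2) * x'.1 +
        (-(Real.cos y.1) * Real.exp y.2 * v.1 - Real.sin y.1 * Real.exp y.2 * v.2) * x'.2 +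
        Real.exp (2 * y.2) * v.2 := by
    funext x'
    rw [(hasFDerivAt_polarCost_y x' y).fderiv]
    simp [DyC]
    ring
  rw [h, fderiv_affine]

theorem polarCost_nondegenerate_onesided_twist :
    (∀ x y : ℝ × ℝ, (mixedSecond2 polarCost x y).det = -Real.exp (2 * y.2) ∧
      (mixedSecond2 polarCost x y).det < 0) ∧
    (∀ y : ℝ × ℝ,
      Function.Injective (fun x : ℝ × ℝ => fderiv ℝ (fun y' => polarCost x y') y)) ∧
    (∀ x : ℝ × ℝ,
      ¬ Function.Injective (fun y : ℝ × ℝ => fderiv ℝ (fun x' => polarCost x' y) x)) := by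
  refine ⟨fun x y => ?_, fun y a b hab => ?_, fun x hinj => ?_⟩
  · have hdet : (mixedSecond2 polarCost x y).det = -Real.exp (2 * y.2) := by
      rw [Matrix.det_fin_two]
      simp only [mixedSecond2, key, stdBasis2]
      have h1 : Real.exp y.2 * Real.exp y.2 = Real.exp (2 * y.2) := by
        rw [← Real.exp_add]; ring_nf
      have h2 := Real.sin_sq_add_cos_sq y.1
      simp only [Matrix.cons_val_zero, Matrix.cons_val_one, Matrix.head_cons]
      nlinarith [h1, h2]
    exact ⟨hdet, hdet ▸ by simpa using Real.exp_pos (2 * y.2)⟩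
  · have h : DyC a y = DyC b y := by
      rw [← (hasFDerivAt_polarCost_y a y).fderiv, ← (hasFDerivAt_polarCost_y b y).fderiv]
      exact hab
    have e1 : (a.1 * Real.sin y.1 - a.2 * Real.cos y.1) * Real.exp y.2 =
        (b.1 * Real.sin y.1 - b.2 * Real.cos y.1) * Real.exp y.2 := by
      have := congrArg (fun L : (ℝ × ℝ) →L[ℝ] ℝ => L (1, 0)) h
      simpa [DyC] using this
    have e2 : -(a.1 * Real.cos y.1 + a.2 * Real.sin y.1) * Real.exp y.2 =
        -(b.1 * Real.cos y.1 + b.2 * Real.sin y.1) * Real.exp y.2 := by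
      have := congrArg (fun L : (ℝ × ℝ) →L[ℝ] ℝ => L (0, 1)) h
      simpa [DyC] using this
    have he := Real.exp_ne_zero y.2
    have e1' : a.1 * Real.sin y.1 - a.2 * Real.cos y.1 =
        b.1 * Real.sin y.1 - b.2 * Real.cos y.1 := by
      field_simp at e1; linarith [e1]
    have e2' : a.1 * Real.cos y.1 + a.2 * Real.sin y.1 =
        b.1 * Real.cos y.1 + b.2 * Real.sin y.1 := by
      have := mul_right_cancel₀ he e2
      linarith [this]
    have hp := Real.sin_sq_add_cos_sq y.1
    have h1 : a.1 = b.1 := by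
      linear_combination Real.sin y.1 * e1' + Real.cos y.1 * e2' - (a.1 - b.1) * hp
    have h2 : a.2 = b.2 := by
      linear_combination -Real.cos y.1 * e1' + Real.sin y.1 * e2' - (a.2 - b.2) * hp
    exact Prod.ext h1 h2
  · have hfun : (fun x' : ℝ × ℝ => polarCost x' ((0 : ℝ), (0 : ℝ))) =
        (fun x' : ℝ × ℝ => polarCost x' (2 * Real.pi, (0 : ℝ))) := by
      funext x'
      simp [polarCost, Real.cos_two_pi, Real.sin_two_pi]
    have := hinj (a₁ := ((0 : ℝ), (0 : ℝ))) (a₂ := (2 * Real.pi, (0 : ℝ))) (by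
      show fderiv ℝ (fun x' => polarCost x' ((0 : ℝ), (0 : ℝ))) x =
        fderiv ℝ (fun x' => polarCost x' (2 * Real.pi, (0 : ℝ))) x
      rw [hfun])
    have hpi : (0 : ℝ) = 2 * Real.pi := congrArg Prod.fst this
    have := Real.pi_pos
    linarith
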